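/- Every closed meager composant of a continuum X is an ample subcontinuum of X. -/

import Mathlib

/-!
Given an open `U ⊇ M`, choose an open `V` with `M ⊆ V ⊆ closure V ⊆ U` and let `K` be the
component of `closure V` containing `M`. If some `y ∈ M` were not interior to `K`, pick points
`wₙ → y` of `closure V` outside `K`. The components of `closure V` through the `wₙ` are disjoint
from `K`, so their Kuratowski upper limit `S` is a continuum through `y`, contained in `K` and with
empty interior; by boundary bumping each of these components, hence also `S`, reaches the frontier
of `closure V`. Being a nowhere dense continuum meeting `M`, `S` lies in `M ⊆ V`, a contradiction.
-/

open Set Topology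

/-- The meager composant of `x`: the union of all nowhere dense subcontinua containing `x`. -/
def MeagerComposant (X : Type) [TopologicalSpace X] (x : X) : Set X :=
  ⋃₀ {L : Set X | IsCompact L ∧ IsConnected L ∧ IsNowhereDense L ∧ x ∈ L}

/-- A continuum is hereditarily unicoherent if the intersection of any two subcontinua
is connected (possibly empty, hence preconnected). -/
def HereditarilyUnicoherent (X : Type) [TopologicalSpace X] : Prop :=
  ∀ A B : Set X, IsCompact A → IsConnected A → IsCompact B → IsConnected B →
    IsPreconnected (A ∩ B)

/-- A subcontinuum `A` of `X` is ample if every open neighborhood of `A` contains a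
subcontinuum having `A` in its interior. -/
def Ample {X : Type} [TopologicalSpace X] (A : Set X) : Prop :=
  ∀ U : Set X, IsOpen U → A ⊆ U →
    ∃ K : Set X, IsCompact K ∧ IsPreconnected K ∧ A ⊆ interior K ∧ K ⊆ U

/-- A set `C` is indecomposable if it is not the union of two proper subcontinua. -/
def IndecomposableSet {X : Type} [TopologicalSpace X] (C : Set X) : Prop :=
  ¬ ∃ H K : Set X, IsCompact H ∧ IsConnected H ∧ IsCompact K ∧ IsConnected K ∧
    H ⊆ C ∧ K ⊆ C ∧ H ≠ C ∧ K ≠ C ∧ H ∪ K = C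

open Filter

section UpperLimit

variable {X : Type*} [TopologicalSpace X]

/-- Kuratowski's upper limit: the points every neighbourhood of which meets infinitely many
`C n`. -/
def upperLimit (C : ℕ → Set X) : Set X :=
  ⋂ m, closure (⋃ n ≥ m, C n)

theorem isClosed_upperLimit (C : ℕ → Set X) : IsClosed (upperLimit C) :=
  isClosed_iInter fun _ => isClosed_closure

theorem upperLimit_mono {C D : ℕ → Set X} (h : ∀ n, C n ⊆ D n) : upperLimit C ⊆ upperLimit D :=
  iInter_mono fun _ => closure_mono (iUnion₂_mono fun n _ => h n)

theorem upperLimit_subset_closure_iUnion (C : ℕ → Set X) :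
    upperLimit C ⊆ closure (⋃ n, C n) :=
  (iInter_subset _ 0).trans (closure_mono (iUnion₂_subset fun n _ => subset_iUnion C n))

theorem upperLimit_subset_of_isClosed {C : ℕ → Set X} {F : Set X} (hF : IsClosed F)
    (h : ∀ n, C n ⊆ F) : upperLimit C ⊆ F :=
  (upperLimit_subset_closure_iUnion C).trans (closure_minimal (iUnion_subset h) hF)

theorem mem_upperLimit_of_tendsto {C : ℕ → Set X} {w : ℕ → X} {y : X} (hw : ∀ n, w n ∈ C n)
    (hwy : Tendsto w atTop (𝓝 y)) : y ∈ upperLimit C :=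
  mem_iInter.2 fun m => mem_closure_of_tendsto hwy <|
    (eventually_ge_atTop m).mono fun n hn => mem_biUnion hn (hw n)

theorem frequently_inter_nonempty_of_mem_upperLimit {C : ℕ → Set X} {z : X}
    (hz : z ∈ upperLimit C) {O : Set X} (hO : IsOpen O) (hzO : z ∈ O) :
    ∃ᶠ n in atTop, (C n ∩ O).Nonempty := by
  refine frequently_atTop.2 fun m => ?_
  obtain ⟨r, hrO, hr⟩ := mem_closure_iff.1 (mem_iInter.1 hz m) O hO hzO
  obtain ⟨n, hn, hrC⟩ := mem_iUnion₂.1 hr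
  exact ⟨n, hn, r, hrC, hrO⟩

theorem interior_upperLimit_eq_empty {C : ℕ → Set X} (h : ∀ n, Disjoint (C n) (upperLimit C)) :
    interior (upperLimit C) = ∅ := by
  have hdisj : Disjoint (interior (upperLimit C)) (closure (⋃ n, C n)) :=
    (disjoint_iUnion_right.2 fun n => ((h n).mono_right interior_subset).symm).closure_right
      isOpen_interior
  exact hdisj.eq_bot_of_le (interior_subset.trans (upperLimit_subset_closure_iUnion C))

variable [CompactSpace X]

theorem upperLimit_nonempty {C : ℕ → Set X} (h : ∀ n, (C n).Nonempty) :
    (upperLimit C).Nonempty :=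
  isClosed_closure.isCompact.nonempty_iInter_of_sequence_nonempty_isCompact_isClosed _
    (fun _ => closure_mono (biUnion_subset_biUnion_left fun _ hn => Nat.le_of_succ_le hn))
    (fun m => ((h m).mono (subset_biUnion_of_mem le_rfl)).mono subset_closure)
    fun _ => isClosed_closure

theorem eventually_subset_of_upperLimit_subset {C : ℕ → Set X} {O : Set X} (hO : IsOpen O)
    (h : upperLimit C ⊆ O) : ∀ᶠ n in atTop, C n ⊆ O := by
  have hanti : Antitone fun m => closure (⋃ n ≥ m, C n) := fun _ _ hab =>
    closure_mono (biUnion_subset_biUnion_left fun _ hn => le_trans hab hn)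
  obtain ⟨m, hm⟩ := hO.isClosed_compl.isCompact.elim_directed_family_closed _
    (fun _ => isClosed_closure)
    (disjoint_iff_inter_eq_empty.1 (disjoint_compl_left_iff_subset.2 h)) hanti.directed_ge
  filter_upwards [eventually_ge_atTop m] with n hn q hq
  by_contra hqO
  exact (hm.subset ⟨hqO, subset_closure (mem_biUnion hn hq)⟩ :)

theorem upperLimit_subset_of_tendsto_mem {C : ℕ → Set X} (hC : ∀ n, IsPreconnected (C n))
    {w : ℕ → X} {y : X} (hw : ∀ n, w n ∈ C n) (hwy : Tendsto w atTop (𝓝 y)) {u v : Set X}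
    (hu : IsOpen u) (hv : IsOpen v) (huv : Disjoint u v) (hS : upperLimit C ⊆ u ∪ v)
    (hy : y ∈ u) : upperLimit C ⊆ u := by
  intro z hz
  by_contra hzu
  have hzv : z ∈ v := (hS hz).resolve_left hzu
  obtain ⟨n, ⟨hCn, hwn⟩, hmeet⟩ :=
    (((eventually_subset_of_upperLimit_subset (hu.union hv) hS).and
      (hwy.eventually (hu.mem_nhds hy))).and_frequently
      (frequently_inter_nonempty_of_mem_upperLimit hz hv hzv)).exists
  obtain ⟨r, -, hru, hrv⟩ := hC n u v hu hv hCn ⟨w n, hw n, hwn⟩ hmeet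
  exact disjoint_left.1 huv hru hrv

theorem isPreconnected_upperLimit [NormalSpace X] {C : ℕ → Set X}
    (hC : ∀ n, IsPreconnected (C n)) {w : ℕ → X} {y : X} (hw : ∀ n, w n ∈ C n)
    (hwy : Tendsto w atTop (𝓝 y)) : IsPreconnected (upperLimit C) := by
  rw [isPreconnected_iff_subset_of_fully_disjoint_closed (isClosed_upperLimit C)]
  intro a b ha hb hab hdisj
  obtain ⟨u, v, hu, hv, hau, hbv, huv⟩ := normal_separation ha hb hdisj
  have hS : upperLimit C ⊆ u ∪ v := hab.trans (union_subset_union hau hbv)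
  rcases hS (mem_upperLimit_of_tendsto hw hwy) with hyu | hyv
  · have hSu := upperLimit_subset_of_tendsto_mem hC hw hwy hu hv huv hS hyu
    exact .inl fun z hz => (hab hz).resolve_right fun hzb => disjoint_left.1 huv (hSu hz) (hbv hzb)
  · have hSv := upperLimit_subset_of_tendsto_mem hC hw hwy hv hu huv.symm
      (hS.trans (union_comm u v).subset) hyv
    exact .inr fun z hz => (hab hz).resolve_left fun hza => disjoint_left.1 huv (hau hza) (hSv hz)

end UpperLimit

section Components

variable {X : Type*} [TopologicalSpace X]

theorem IsNowhereDense.union {s t : Set X} (hs : IsNowhereDense s) (ht : IsNowhereDense t) :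
    IsNowhereDense (s ∪ t) := by
  rw [IsNowhereDense, closure_union, interior_union_isClosed_of_interior_empty isClosed_closure ht]
  exact hs

theorem isClosed_connectedComponentIn {F : Set X} (hF : IsClosed F) (x : X) :
    IsClosed (connectedComponentIn F x) := by
  by_cases hx : x ∈ F
  · exact closure_subset_iff_isClosed.1 <|
      isPreconnected_connectedComponentIn.closure.subset_connectedComponentIn
        (subset_closure (mem_connectedComponentIn hx))
        (closure_minimal (connectedComponentIn_subset F x) hF)
  · rw [connectedComponentIn_eq_empty hx]
    exact isClosed_empty

theorem exists_isClopen_subset_of_connectedComponent_subset [CompactSpace X] [T2Space X]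
    {x : X} {U : Set X} (hU : IsOpen U) (h : connectedComponent x ⊆ U) :
    ∃ W, IsClopen W ∧ x ∈ W ∧ W ⊆ U := by
  have : Nonempty { s : Set X // IsClopen s ∧ x ∈ s } := ⟨⟨univ, isClopen_univ, mem_univ x⟩⟩
  rw [connectedComponent_eq_iInter_isClopen] at h
  obtain ⟨⟨W, hW, hxW⟩, hWU⟩ := hU.isClosed_compl.isCompact.elim_directed_family_closed
    (fun s : { s : Set X // IsClopen s ∧ x ∈ s } => (s : Set X)) (fun s => s.2.1.isClosed)
    (disjoint_iff_inter_eq_empty.1 (disjoint_compl_left_iff_subset.2 h))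
    fun s t => ⟨⟨s ∩ t, s.2.1.inter t.2.1, s.2.2, t.2.2⟩, inter_subset_left, inter_subset_right⟩
  exact ⟨W, hW, hxW, disjoint_compl_left_iff_subset.1 (disjoint_iff_inter_eq_empty.2 hWU)⟩

/-- Boundary bumping. -/
theorem IsClosed.connectedComponentIn_inter_frontier_nonempty [CompactSpace X] [T2Space X]
    [ConnectedSpace X] {F : Set X} (hF : IsClosed F) (hFne : F ≠ univ) {p : X} (hp : p ∈ F) :
    (connectedComponentIn F p ∩ frontier F).Nonempty := by
  by_contra h
  have : CompactSpace F := isCompact_iff_compactSpace.1 hF.isCompact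
  have hC : connectedComponent (⟨p, hp⟩ : F) ⊆ (↑) ⁻¹' interior F := by
    intro q hq
    by_contra hqi
    have hq' : (q : X) ∈ connectedComponentIn F p := by
      rw [connectedComponentIn_eq_image hp]
      exact mem_image_of_mem _ hq
    exact h ⟨q, hq', hF.frontier_eq ▸ ⟨q.2, hqi⟩⟩
  obtain ⟨W, hW, hpW, hWi⟩ := exists_isClopen_subset_of_connectedComponent_subset
    (isOpen_interior.preimage continuous_subtype_val) hC
  -- `W` is open in `F` and lies in `interior F`, so its image is open in `X`.
  have hWX : IsClopen (((↑) : F → X) '' W) := by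
    refine ⟨hF.isClosedMap_subtype_val _ hW.isClosed, isOpen_iff_mem_nhds.2 ?_⟩
    rintro _ ⟨q, hq, rfl⟩
    rw [← nhdsWithin_eq_nhds.2 (mem_interior_iff_mem_nhds.1 (hWi hq))]
    exact mem_nhds_subtype_iff_nhdsWithin.1 (hW.isOpen.mem_nhds hq)
  exact hFne (univ_subset_iff.1 (hWX.eq_univ ⟨p, _, hpW, rfl⟩ ▸ Subtype.coe_image_subset F W))

end Components

theorem exists_isNowhereDense_continuum_meets_frontier {X : Type*} [TopologicalSpace X]
    [CompactSpace X] [T2Space X] [ConnectedSpace X] [FirstCountableTopology X] {F : Set X}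
    (hF : IsClosed F) (hFne : F ≠ univ) {y : X} (hyF : y ∈ interior F)
    (hyK : y ∉ interior (connectedComponentIn F y)) :
    ∃ S, IsClosed S ∧ IsPreconnected S ∧ IsNowhereDense S ∧ y ∈ S ∧ (S ∩ frontier F).Nonempty := by
  set K := connectedComponentIn F y
  have hy : y ∈ closure (F \ K) := by
    have hyKc : y ∈ closure Kᶜ := by rwa [closure_compl]
    exact closure_mono (inter_subset_inter_left _ interior_subset)
      (isOpen_interior.inter_closure ⟨hyF, hyKc⟩)
  obtain ⟨w, hwFK, hwy⟩ := mem_closure_iff_seq_limit.1 hy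
  set C := fun n => connectedComponentIn F (w n)
  have hwC : ∀ n, w n ∈ C n := fun n => mem_connectedComponentIn (hwFK n).1
  have hSpc : IsPreconnected (upperLimit C) :=
    isPreconnected_upperLimit (fun _ => isPreconnected_connectedComponentIn) hwC hwy
  have hyS : y ∈ upperLimit C := mem_upperLimit_of_tendsto hwC hwy
  have hSK : upperLimit C ⊆ K := hSpc.subset_connectedComponentIn hyS
    (upperLimit_subset_of_isClosed hF fun n => connectedComponentIn_subset F (w n))
  have hCK : ∀ n, Disjoint (C n) K := fun n => disjoint_left.2 fun q hqC hqK =>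
    (hwFK n).2 (((connectedComponentIn_eq hqC).trans (connectedComponentIn_eq hqK).symm).subset
      (hwC n))
  have hSfr : (upperLimit C ∩ frontier F).Nonempty :=
    (upperLimit_nonempty fun n => hF.connectedComponentIn_inter_frontier_nonempty hFne
      (hwFK n).1).mono <| subset_inter (upperLimit_mono fun _ => inter_subset_left)
        (upperLimit_subset_of_isClosed isClosed_frontier fun _ => inter_subset_right)
  exact ⟨upperLimit C, isClosed_upperLimit C, hSpc, (isClosed_upperLimit C).isNowhereDense_iff.2
    (interior_upperLimit_eq_empty fun n => (hCK n).mono_right hSK), hyS, hSfr⟩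

theorem ample_of_absorbs_isNowhereDense_continua {X : Type} [TopologicalSpace X] [CompactSpace X]
    [T2Space X] [ConnectedSpace X] [FirstCountableTopology X] {A : Set X} (hA : IsClosed A)
    (hApc : IsPreconnected A)
    (habsorb : ∀ S, IsCompact S → IsPreconnected S → IsNowhereDense S → (S ∩ A).Nonempty →
      S ⊆ A) :
    Ample A := by
  intro U hU hAU
  rcases A.eq_empty_or_nonempty with rfl | ⟨a, ha⟩
  · exact ⟨∅, isCompact_empty, isPreconnected_empty, empty_subset _, empty_subset _⟩
  by_cases hUuniv : U = univ
  · exact ⟨univ, isCompact_univ, isPreconnected_univ, by simp, hUuniv ▸ subset_rfl⟩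
  obtain ⟨V, hV, hAV, hVU⟩ := normal_exists_closure_subset hA hU hAU
  have hFne : closure V ≠ univ := fun h => hUuniv (univ_subset_iff.1 (h ▸ hVU))
  have hAF : A ⊆ interior (closure V) := hAV.trans hV.subset_interior_closure
  have hAK : A ⊆ connectedComponentIn (closure V) a :=
    hApc.subset_connectedComponentIn ha (hAF.trans interior_subset)
  refine ⟨connectedComponentIn (closure V) a,
    (isClosed_connectedComponentIn isClosed_closure a).isCompact,
    isPreconnected_connectedComponentIn, fun y hy => ?_,
    (connectedComponentIn_subset _ _).trans hVU⟩
  by_contra hyK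
  rw [connectedComponentIn_eq (hAK hy)] at hyK
  obtain ⟨S, hS, hSpc, hSnd, hyS, z, hzS, hzfr⟩ :=
    exists_isNowhereDense_continuum_meets_frontier isClosed_closure hFne (hAF hy) hyK
  exact hzfr.2 (hAF (habsorb S hS.isCompact hSpc hSnd ⟨y, hyS, hy⟩ hzS))

section MeagerComposant

variable {X : Type} [TopologicalSpace X]

theorem isPreconnected_meagerComposant (x : X) : IsPreconnected (MeagerComposant X x) :=
  isPreconnected_sUnion x _ (fun _ hL => hL.2.2.2) fun _ hL => hL.2.1.isPreconnected

theorem subset_meagerComposant_of_inter_nonempty {x : X} {S : Set X} (hS : IsCompact S)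
    (hSpc : IsPreconnected S) (hSnd : IsNowhereDense S) (hSM : (S ∩ MeagerComposant X x).Nonempty) :
    S ⊆ MeagerComposant X x := by
  obtain ⟨y, hyS, L, ⟨hLc, hLconn, hLnd, hxL⟩, hyL⟩ := hSM
  exact subset_union_right.trans <| subset_sUnion_of_mem
    ⟨hLc.union hS, hLconn.union ⟨y, hyL, hyS⟩ ⟨⟨y, hyS⟩, hSpc⟩, hLnd.union hSnd, .inl hxL⟩

end MeagerComposant

theorem closed_meagerComposant_ample_general (X : Type) [MetricSpace X] [CompactSpace X] [ConnectedSpace X] (x : X)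
    (hclosed : IsClosed (MeagerComposant X x)) :
    IsCompact (MeagerComposant X x) ∧ IsPreconnected (MeagerComposant X x) ∧
      Ample (MeagerComposant X x) :=
  ⟨hclosed.isCompact, isPreconnected_meagerComposant x,
    ample_of_absorbs_isNowhereDense_continua hclosed (isPreconnected_meagerComposant x)
      fun _ hS hSpc hSnd hSM => subset_meagerComposant_of_inter_nonempty hS hSpc hSnd hSM⟩

/-- Every closed meager composant of a continuum is an ample subcontinuum. -/
theorem closed_meagerComposant_ample (X : Type) [MetricSpace X] [CompactSpace X] [ConnectedSpace X] [Nonempty X] (x : X)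
    (hclosed : IsClosed (MeagerComposant X x)) :
    IsCompact (MeagerComposant X x) ∧ IsPreconnected (MeagerComposant X x) ∧
      Ample (MeagerComposant X x) :=
  closed_meagerComposant_ample_general X x hclosed
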